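/- Let H = {0, 89, 178, 267, 356, 445, 534} ⊆ ℤ/623ℤ and let B = {0, 1, 4, 197, 280, 335, 354, 601} ⊆ ℤ/623ℤ. Then H is a subgroup of ℤ/623ℤ of order 7, and the eleven difference sets Δ(8ⁱ·B) for i = 0, 1, …, 10 are pairwise disjoint, each has cardinality 56, each is disjoint from H, and their union together with H \ {0} is (ℤ/623ℤ) \ {0}. -/
import Mathlib

/-- The set of differences `ΔB = {a - c : a, c ∈ B, a ≠ c}`. -/
def diffSet (B : Finset (ZMod 623)) : Finset (ZMod 623) :=
  ((B ×ˢ B).filter fun p => p.1 ≠ p.2).image fun p => p.1 - p.2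

/-- The subgroup block `H = {0, 89, 178, 267, 356, 445, 534}` of `ℤ/623ℤ`. -/
def Hblock : Finset (ZMod 623) := {0, 89, 178, 267, 356, 445, 534}

/-- The base block `B`. -/
def baseBlock : Finset (ZMod 623) := {0, 1, 4, 197, 280, 335, 354, 601}

/-- The dilates `8ⁱ · B` of the base block, for `i = 0, 1, …, 10`. -/
def dilate (i : Fin 11) : Finset (ZMod 623) :=
  baseBlock.image fun x => (8 : ZMod 623) ^ (i : ℕ) * x

def Dl : Fin 11 → List ℕ := ![[1, 3, 4, 19, 22, 23, 26, 55, 74, 83, 138, 157, 193, 196, 197, 219, 247, 266, 269, 270, 273, 276, 279, 280, 288, 289, 292, 302, 321, 331, 334, 335, 343, 344, 347, 350, 353, 354, 357, 376, 404, 426, 427, 430, 466, 485, 540, 549, 568, 597, 600, 601, 604, 619, 620, 622], [8, 10, 24, 31, 32, 41, 76, 107, 117, 142, 152, 156, 176, 180, 183, 184, 188, 208, 252, 259, 260, 283, 284, 291, 293, 298, 301, 308, 315, 322, 325, 330, 332, 339, 340, 363, 364, 371, 415, 435, 439, 440, 443, 447, 467, 471, 481, 506, 516, 547, 582, 591, 592,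 599, 613, 615], [2, 15, 28, 30, 64, 80, 84, 108, 110, 147, 148, 162, 164, 192, 194, 203, 205, 211, 218, 220, 226, 228, 233, 248, 256, 258, 295, 310, 313, 328, 365, 367, 375, 390, 395, 397, 403, 405, 412, 418, 420, 429, 431, 459, 461, 475, 476, 513, 515, 539, 543, 559, 593, 595, 608, 621], [5, 12, 16, 17, 45, 49, 50, 61, 62, 66, 70, 109, 111, 115, 120, 125, 132, 179, 181, 195, 224, 229, 240, 241, 245, 257, 290, 306, 317, 333, 366, 378, 382, 383, 394, 399, 428, 442, 444, 491, 498, 503, 508, 512, 514, 553, 557, 561, 562, 573, 574, 578, 606, 607, 611, 618], [37, 40, 44, 51, 59, 63, 77, 91, 95, 96, 127, 128, 135, 136, 172, 186, 187, 190, 202, 223, 231, 246, 249, 263, 265, 286, 297, 309, 314, 326, 337, 358, 360, 374, 377, 392, 400, 421, 433, 436, 437, 451, 487, 488, 495, 496, 527, 528, 532, 546, 560, 564, 572, 579, 583, 586], [7, 20, 21, 85, 99, 105, 116, 119, 123, 130, 137, 145, 151, 158, 166, 204, 215, 222, 230, 235, 242, 250, 251, 253, 271, 274, 296, 303, 320,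 327, 349, 352, 370, 372, 373, 381, 388, 393, 401, 408, 419, 457, 465, 472, 478, 486, 493, 500, 504, 507, 518, 524, 538, 602, 603, 616], [11, 18, 29, 38, 56, 57, 67, 68, 82, 86, 93, 124, 131, 139, 149, 150, 155, 160, 168, 169, 206, 217, 237, 262, 294, 299, 300, 305, 318, 323, 324, 329, 361, 386, 406, 417, 454, 455, 463, 468, 473, 474, 484, 492, 499, 530, 537, 541, 555, 556, 566, 567, 585, 594, 605, 612], [6, 27, 33, 34, 46, 52, 54, 65, 79, 87, 88, 92, 98, 100, 106, 121, 133, 134, 140, 144, 167, 175, 198, 221, 227, 232, 254, 304, 319, 369, 391, 396, 402, 425, 448, 456, 479, 483, 489, 490, 502, 517, 523, 525, 531, 535, 536, 544, 558, 569, 571, 577, 589, 590, 596, 617], [9, 13, 48, 53, 60, 73, 81, 90, 94, 101, 103, 113, 126, 154, 161, 163, 174, 177, 182, 191, 207, 216, 225, 255, 264, 272, 278, 285, 338, 345, 351, 359, 368, 398, 407, 416, 432, 441, 446, 449, 460, 462, 469, 497, 510, 520, 522, 529, 533, 542, 550, 563, 570, 575, 610, 614], [14, 25, 39, 42, 58,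 69, 72, 97, 104, 129, 141, 143, 146, 170, 171, 185, 199, 201, 210, 212, 213, 238, 239, 243, 268, 281, 282, 307, 316, 341, 342, 355, 380, 384, 385, 410, 411, 413, 422, 424, 438, 452, 453, 477, 480, 482, 494, 519, 526, 551, 554, 565, 581, 584, 598, 609], [35, 36, 43, 47, 71, 75, 78, 102, 112, 114, 118, 122, 153, 159, 165, 173, 189, 200, 209, 214, 234, 236, 244, 261, 275, 277, 287, 311, 312, 336, 346, 348, 362, 379, 387, 389, 409, 414, 423, 434, 450, 458, 464, 470, 501, 505, 509, 511, 521, 545, 548, 552, 576, 580, 587, 588]]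

def HL : List ℕ := [0, 89, 178, 267, 356, 445, 534]

def tableNum : ℕ := 11474201662441892813563434555773671263556017587458765586201714916866626400535518000897955652960112339477221158324077804222912254974857001449486510934274498132542416439360926400145399322597000497622953939523221232013583532043073742757653230628502106225536768719007760417334980798695752979172645964943872280989523810455181913953827092458535546699618771515485290886769350988044245099097922117441517025183959985803281442376138803704452484198865577871690606985974015081987836646276698679182997170821951734675562514704047540905975135329453071420596936728833210343354699901961781732671273757123810023143411372768312947166249898013872936368126617547638101010347493765538970353370239427505180719965561414014159244026893807879992198774230153355212410080723467

def digit (n : ℕ) : ℕ := tableNum / 16 ^ n % 16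

def sb : ℕ → List ℕ → Bool
  | _, [] => true
  | p, n :: t => p.blt n && n.blt 623 && sb n t

def L2F (l : List ℕ) : Finset (ZMod 623) := (l.map (Nat.cast : ℕ → ZMod 623)).toFinset

set_option exponentiation.threshold 20000 in
set_option maxRecDepth 400000 in
theorem c1bool : ∀ i : Fin 11, ((Dl i).all fun n => digit n == i.val) = true := by decide

set_option exponentiation.threshold 20000 in
set_option maxRecDepth 400000 in
theorem c2bool : (HL.all fun n => digit n == 11) = true := by decide

set_option maxRecDepth 400000 in
theorem sbAll : ∀ i : Fin 11, sb 0 (Dl i) = true := by decide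

theorem lenDl : ∀ i : Fin 11, (Dl i).length = 56 := by decide

set_option maxRecDepth 400000 in
set_option maxHeartbeats 4000000 in
theorem key : ∀ i : Fin 11, diffSet (dilate i) = L2F (Dl i) := by decide

set_option maxRecDepth 400000 in
theorem HblockEq : Hblock = L2F HL := by decide

theorem c1 : ∀ i : Fin 11, ∀ n ∈ Dl i, digit n = i.val := by
  intro i n hn
  exact beq_iff_eq.mp (List.all_eq_true.mp (c1bool i) n hn)

theorem c2 : ∀ n ∈ HL, digit n = 11 := by
  intro n hn
  exact beq_iff_eq.mp (List.all_eq_true.mp c2bool n hn)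

theorem sb_spec : ∀ (l : List ℕ) (p : ℕ), sb p l = true →
    l.Nodup ∧ ∀ n ∈ l, p < n ∧ n < 623 := by
  intro l
  induction l with
  | nil => intro p _; exact ⟨List.nodup_nil, by simp⟩
  | cons n t ih =>
    intro p h
    simp only [sb, Bool.and_eq_true, Nat.blt_eq] at h
    obtain ⟨⟨h1, h2⟩, h3⟩ := h
    obtain ⟨hnd, hb⟩ := ih n h3
    refine ⟨List.nodup_cons.mpr ⟨fun hmem => ?_, hnd⟩, ?_⟩
    · exact lt_irrefl n (hb n hmem).1
    · intro m hm
      rcases List.mem_cons.mp hm with rfl | hm'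
      · exact ⟨h1, h2⟩
      · exact ⟨h1.trans (hb m hm').1, (hb m hm').2⟩

theorem mem_L2F {l : List ℕ} {x : ZMod 623} : x ∈ L2F l ↔ ∃ n ∈ l, (n : ZMod 623) = x := by
  simp [L2F]

theorem cast_inj_of_lt {a b : ℕ} (ha : a < 623) (hb : b < 623)
    (h : (a : ZMod 623) = (b : ZMod 623)) : a = b := by
  have := congrArg ZMod.val h
  rwa [ZMod.val_natCast_of_lt ha, ZMod.val_natCast_of_lt hb] at this

theorem card_L2F {l : List ℕ} (hnd : l.Nodup) (hlt : ∀ n ∈ l, n < 623) :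
    (L2F l).card = l.length := by
  rw [L2F, List.toFinset_card_of_nodup, List.length_map]
  exact hnd.map_on fun a ha b hb hab => cast_inj_of_lt (hlt a ha) (hlt b hb) hab

theorem disjDD {i j : Fin 11} (hij : i ≠ j) : Disjoint (L2F (Dl i)) (L2F (Dl j)) := by
  rw [Finset.disjoint_left]
  intro x hx hx'
  obtain ⟨a, ha, rfl⟩ := mem_L2F.mp hx
  obtain ⟨b, hb, hba⟩ := mem_L2F.mp hx'
  have hai := (sb_spec _ _ (sbAll i)).2 a ha
  have hbj := (sb_spec _ _ (sbAll j)).2 b hb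
  have hab : b = a := cast_inj_of_lt hbj.2 hai.2 hba
  subst hab
  exact hij (Fin.ext ((c1 i b ha).symm.trans (c1 j b hb)))

theorem disjDH (i : Fin 11) : Disjoint (L2F (Dl i)) Hblock := by
  rw [HblockEq, Finset.disjoint_left]
  intro x hx hx'
  obtain ⟨a, ha, rfl⟩ := mem_L2F.mp hx
  obtain ⟨b, hb, hba⟩ := mem_L2F.mp hx'
  have hai := (sb_spec _ _ (sbAll i)).2 a ha
  have hblt : b < 623 := by fin_cases hb <;> norm_num
  have hab : b = a := cast_inj_of_lt hblt hai.2 hba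
  subst hab
  have h11 := (c1 i b ha).symm.trans (c2 b hb)
  have := i.isLt
  omega

theorem ne_zero_of_mem {i : Fin 11} {x : ZMod 623} (hx : x ∈ L2F (Dl i)) : x ≠ 0 := by
  obtain ⟨a, ha, rfl⟩ := mem_L2F.mp hx
  have hai := (sb_spec _ _ (sbAll i)).2 a ha
  intro h0
  have := congrArg ZMod.val h0
  rw [ZMod.val_natCast_of_lt hai.2, ZMod.val_zero] at this
  omega

set_option maxRecDepth 400000 in
set_option maxHeartbeats 1000000 in
/-- `H` is a subgroup of `ℤ/623ℤ` of order `7`, and the eleven difference sets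
`Δ(8ⁱ · B)`, `i = 0, …, 10`, are pairwise disjoint, each has cardinality `56`,
each is disjoint from `H`, and their union together with `H \ {0}` is
`ℤ/623ℤ \ {0}`. -/
theorem one_rotational_difference_family_zmod_623_15 :
    (∃ S : AddSubgroup (ZMod 623), (S : Set (ZMod 623)) = (Hblock : Set (ZMod 623))) ∧
    Hblock.card = 7 ∧
    (∀ i j, i ≠ j → Disjoint (diffSet (dilate i)) (diffSet (dilate j))) ∧
    (∀ i, (diffSet (dilate i)).card = 56) ∧
    (∀ i, Disjoint (diffSet (dilate i)) Hblock) ∧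
    (Hblock \ {0}) ∪ (Finset.univ.biUnion fun i => diffSet (dilate i)) =
      Finset.univ \ {0} := by
  have hcard7 : Hblock.card = 7 := by decide
  refine ⟨⟨{ carrier := ↑Hblock
             zero_mem' := by
               rw [Finset.mem_coe]; decide
             add_mem' := by
               intro a b ha hb
               rw [Finset.mem_coe] at ha hb ⊢
               fin_cases ha <;> fin_cases hb <;> decide
             neg_mem' := by
               intro a ha
               rw [Finset.mem_coe] at ha ⊢
               fin_cases ha <;> decide }, rfl⟩, hcard7, ?_, ?_, ?_, ?_⟩
  · intro i j hij
    rw [key i, key j]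
    exact disjDD hij
  · intro i
    rw [key i, card_L2F (sb_spec _ _ (sbAll i)).1
      (fun n hn => ((sb_spec _ _ (sbAll i)).2 n hn).2), lenDl i]
  · intro i
    rw [key i]
    exact disjDH i
  · have hUeq : (Finset.univ.biUnion fun i => diffSet (dilate i)) =
        Finset.univ.biUnion fun i => L2F (Dl i) :=
      Finset.biUnion_congr rfl fun i _ => key i
    rw [hUeq]
    have hsub : (Hblock \ {0}) ∪ (Finset.univ.biUnion fun i => L2F (Dl i)) ⊆
        Finset.univ \ {0} := by
      intro x hx
      rw [Finset.mem_sdiff, Finset.mem_singleton]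
      refine ⟨Finset.mem_univ x, ?_⟩
      rcases Finset.mem_union.mp hx with h | h
      · rw [Finset.mem_sdiff, Finset.mem_singleton] at h
        exact h.2
      · obtain ⟨i, _, hxi⟩ := Finset.mem_biUnion.mp h
        exact ne_zero_of_mem hxi
    have hcardU : (Finset.univ.biUnion fun i => L2F (Dl i)).card = 616 := by
      rw [Finset.card_biUnion (fun i _ j _ hij => disjDD hij)]
      have h56 : ∀ i : Fin 11, (L2F (Dl i)).card = 56 := fun i =>
        (card_L2F (sb_spec _ _ (sbAll i)).1
          (fun n hn => ((sb_spec _ _ (sbAll i)).2 n hn).2)).trans (lenDl i)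
      simp [h56]
    have hdisjHU : Disjoint (Hblock \ {0})
        (Finset.univ.biUnion fun i => L2F (Dl i)) := by
      rw [Finset.disjoint_biUnion_right]
      intro i _
      exact ((disjDH i).symm.mono_left Finset.sdiff_subset)
    have hcardL : ((Hblock \ {0}) ∪ (Finset.univ.biUnion fun i => L2F (Dl i))).card = 622 := by
      rw [Finset.card_union_of_disjoint hdisjHU, hcardU,
        Finset.card_sdiff_of_subset (by decide : ({0} : Finset (ZMod 623)) ⊆ Hblock), hcard7,
        Finset.card_singleton]
    have hcardR : ((Finset.univ : Finset (ZMod 623)) \ {0}).card = 622 := by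
      rw [Finset.card_sdiff_of_subset (Finset.subset_univ _), Finset.card_univ, ZMod.card,
        Finset.card_singleton]
    exact Finset.eq_of_subset_of_card_le hsub (by rw [hcardL, hcardR])
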